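/- arXiv:math/0505032 — 2 statements merged into one kernel-verified Lean document; each statement's English description precedes it below -/
import Mathlib

section
/- For all d3 ≥ 2, the curve value d1(d3) = 1 - exp((√d3 - √(d3-2))²/4)/(d3 - √(d3(d3-2))) satisfies 0 < d1(d3) < 1. -/
theorem stmt_15 (d3 : ℝ) (hd3 : 2 ≤ d3) :
    0 < 1 - Real.exp ((Real.sqrt d3 - Real.sqrt (d3 - 2)) ^ 2 / 4) /
          (d3 - Real.sqrt (d3 * (d3 - 2))) ∧
      1 - Real.exp ((Real.sqrt d3 - Real.sqrt (d3 - 2)) ^ 2 / 4) /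
          (d3 - Real.sqrt (d3 * (d3 - 2))) < 1 := by
  have h0 : (0:ℝ) ≤ d3 := by linarith
  have h2 : (0:ℝ) ≤ d3 - 2 := by linarith
  set w := Real.sqrt (d3 * (d3 - 2)) with hw
  have hwnn : 0 ≤ w := Real.sqrt_nonneg _
  have hwsq : w ^ 2 = d3 * (d3 - 2) := Real.sq_sqrt (by positivity)
  have hwlt : w < d3 - 1 := by nlinarith [hwsq, hwnn]
  have hwge : d3 - 2 ≤ w := by nlinarith [hwsq, hwnn]
  have ha : Real.sqrt d3 ^ 2 = d3 := Real.sq_sqrt h0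
  have hb : Real.sqrt (d3 - 2) ^ 2 = d3 - 2 := Real.sq_sqrt h2
  have hab : Real.sqrt d3 * Real.sqrt (d3 - 2) = w := (Real.sqrt_mul h0 _).symm
  have hexpand : (Real.sqrt d3 - Real.sqrt (d3 - 2)) ^ 2
      = Real.sqrt d3 ^ 2 - 2 * (Real.sqrt d3 * Real.sqrt (d3 - 2))
        + Real.sqrt (d3 - 2) ^ 2 := by ring
  have hexparg : (Real.sqrt d3 - Real.sqrt (d3 - 2)) ^ 2 / 4 = (d3 - 1 - w) / 2 := by
    rw [hexpand, ha, hb, hab]; ring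
  set u := (d3 - 1 - w) / 2 with hu
  have hu1 : 0 < u := by simp only [hu]; linarith
  have hu2 : u ≤ 1 / 2 := by simp only [hu]; linarith
  have hdw : d3 - w = 1 + 2 * u := by simp only [hu]; ring
  have key : Real.exp u < 1 + 2 * u := by
    have h := Real.add_one_lt_exp (x := -u) (by linarith)
    rw [Real.exp_neg] at h
    have hp : 0 < Real.exp u := Real.exp_pos u
    have h' : Real.exp u * (-u + 1) < 1 := by
      have := mul_lt_mul_of_pos_left h hp
      rwa [mul_inv_cancel₀ (ne_of_gt hp)] at this
    nlinarith [h', hp]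
  have hpos : 0 < d3 - w := by linarith
  have hlt : Real.exp ((Real.sqrt d3 - Real.sqrt (d3 - 2)) ^ 2 / 4) < d3 - w := by
    rw [hexparg, hdw]; exact key
  have hdivpos : 0 < Real.exp ((Real.sqrt d3 - Real.sqrt (d3 - 2)) ^ 2 / 4) / (d3 - w) :=
    div_pos (Real.exp_pos _) hpos
  constructor
  · rw [sub_pos, div_lt_one hpos]; exact hlt
  · linarith
end

section
/- The derivative of the curve d1(d3) = 1 - exp((√d3-√(d3-2))²/4)/(d3-√(d3(d3-2))) at d3 = 2 (one-sided, from the right) equals -√e/8. -/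
/-!
Put `s = x - 2 - √(x(x - 2))`. Then `d1 x = g s` for `g = reducedCurve`, and
`s² = (x - 2)(√x - √(x - 2))²`, so `s` is only of order `√(x - 2)`. Since `g'(0) = 0`, l'Hôpital gives
`(g s - g 0) / s² → g''(0) / 2 = -√e / 16`, while `s² / (x - 2) → 2`; the product is the slope.
-/

open Real Filter Set Topology

theorem tendsto_sub_div_sq_of_hasDerivAt {g g' : ℝ → ℝ} {a c : ℝ}
    (hg : ∀ᶠ t in 𝓝 a, HasDerivAt g (g' t) t) (hg'a : g' a = 0) (hg' : HasDerivAt g' c a) :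
    Tendsto (fun t => (g t - g a) / (t - a) ^ 2) (𝓝[≠] a) (𝓝 (c / 2)) := by
  have hslope : Tendsto (fun t => g' t / (2 * (t - a))) (𝓝[≠] a) (𝓝 (c / 2)) := by
    refine ((hasDerivAt_iff_tendsto_slope.mp hg').div_const 2).congr fun t => ?_
    rw [slope_def_field, hg'a, sub_zero, div_div, mul_comm]
  refine HasDerivAt.lhopital_zero_nhdsNE (f' := g') (g' := fun t => 2 * (t - a)) ?_ ?_ ?_ ?_ ?_
    hslope
  · filter_upwards [nhdsWithin_le_nhds hg] with t ht using ht.sub_const (g a)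
  · filter_upwards with t
    simpa using ((hasDerivAt_id' t).sub_const a).fun_pow 2
  · filter_upwards [self_mem_nhdsWithin] with t ht
    exact mul_ne_zero two_ne_zero (sub_ne_zero.mpr ht)
  · refine tendsto_nhdsWithin_of_tendsto_nhds ?_
    simpa using hg.self_of_nhds.continuousAt.tendsto.sub_const (g a)
  · refine tendsto_nhdsWithin_of_tendsto_nhds ?_
    simpa using ((tendsto_id (x := 𝓝 a)).sub_const a).pow 2

noncomputable def reducedCurve (t : ℝ) : ℝ := 1 - exp ((1 + t) / 2) / (2 + t)

theorem hasDerivAt_reducedCurve {t : ℝ} (ht : 2 + t ≠ 0) :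
    HasDerivAt reducedCurve (t * (-exp ((1 + t) / 2) / (2 * (2 + t) ^ 2))) t := by
  have h := ((((hasDerivAt_id' t).const_add 1).div_const 2).exp.fun_div
    ((hasDerivAt_id' t).const_add 2) ht).const_sub 1
  refine h.congr_deriv ?_
  field_simp
  ring

theorem hasDerivAt_deriv_reducedCurve_zero :
    HasDerivAt (fun t => t * (-exp ((1 + t) / 2) / (2 * (2 + t) ^ 2))) (-exp (1 / 2) / 8) 0 := by
  have hφ : DifferentiableAt ℝ (fun t : ℝ => -exp ((1 + t) / 2) / (2 * (2 + t) ^ 2)) 0 := by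
    fun_prop (disch := norm_num)
  refine ((hasDerivAt_id' 0).fun_mul hφ.hasDerivAt).congr_deriv ?_
  norm_num

theorem tendsto_reducedCurve_sub_div_sq :
    Tendsto (fun t => (reducedCurve t - reducedCurve 0) / t ^ 2) (𝓝[≠] 0)
      (𝓝 (-exp (1 / 2) / 16)) := by
  have hderiv : ∀ᶠ t in 𝓝 (0 : ℝ), HasDerivAt reducedCurve
      (t * (-exp ((1 + t) / 2) / (2 * (2 + t) ^ 2))) t := by
    filter_upwards [Ioi_mem_nhds (show (-2 : ℝ) < 0 by norm_num)] with t (ht : -2 < t)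
    exact hasDerivAt_reducedCurve (by linarith)
  convert tendsto_sub_div_sq_of_hasDerivAt hderiv (zero_mul _)
    hasDerivAt_deriv_reducedCurve_zero using 2 <;> ring

theorem sq_sub_sqrt_mul {c x : ℝ} (hc : 0 ≤ c) (hcx : c ≤ x) :
    (x - c - √(x * (x - c))) ^ 2 = (x - c) * (√x - √(x - c)) ^ 2 := by
  have hx : √x ^ 2 = x := sq_sqrt (hc.trans hcx)
  have hxc : √(x - c) ^ 2 = x - c := sq_sqrt (sub_nonneg.mpr hcx)
  rw [sqrt_mul (hc.trans hcx)]
  linear_combination (√(x - c) ^ 2 - (x - c)) * hx + c * hxc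

theorem sub_sqrt_mul_neg {c x : ℝ} (hc : 0 < c) (hcx : c < x) : x - c - √(x * (x - c)) < 0 := by
  have : x - c < √(x * (x - c)) := by
    rw [lt_sqrt (by linarith)]
    nlinarith
  linarith

noncomputable def d1 (x : ℝ) : ℝ := 1 - exp ((√x - √(x - 2)) ^ 2 / 4) / (x - √(x * (x - 2)))

theorem d1_eq_reducedCurve {x : ℝ} (hx : 2 ≤ x) : d1 x = reducedCurve (x - 2 - √(x * (x - 2))) := by
  have hx' : √x ^ 2 = x := sq_sqrt (by linarith)
  have hx2 : √(x - 2) ^ 2 = x - 2 := sq_sqrt (by linarith)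
  rw [d1, reducedCurve, sqrt_mul (by linarith)]
  congr 3
  · linear_combination (hx' + hx2) / 4
  · ring

theorem tendsto_sub_sqrt_mul_nhdsNE {c : ℝ} (hc : 0 < c) :
    Tendsto (fun x => x - c - √(x * (x - c))) (𝓝[>] c) (𝓝[≠] 0) := by
  refine tendsto_nhdsWithin_iff.mpr ⟨tendsto_nhdsWithin_of_tendsto_nhds ?_, ?_⟩
  · have h : Continuous fun x => x - c - √(x * (x - c)) := by fun_prop
    simpa using h.tendsto c
  · filter_upwards [self_mem_nhdsWithin] with x (hx : c < x)
    exact (sub_sqrt_mul_neg hc hx).ne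

theorem slope_d1_two {x : ℝ} (hx : 2 < x) :
    slope d1 2 x = (reducedCurve (x - 2 - √(x * (x - 2))) - reducedCurve 0) /
      (x - 2 - √(x * (x - 2))) ^ 2 * (√x - √(x - 2)) ^ 2 := by
  have hs : x - 2 - √(x * (x - 2)) ≠ 0 := (sub_sqrt_mul_neg two_pos hx).ne
  have hq : √x - √(x - 2) ≠ 0 := by
    intro h
    apply hs
    rw [← sq_eq_zero_iff, sq_sub_sqrt_mul zero_le_two hx.le, h]
    simp
  rw [slope_def_field, d1_eq_reducedCurve hx.le, d1_eq_reducedCurve le_rfl,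
    sq_sub_sqrt_mul zero_le_two hx.le]
  field_simp
  norm_num

theorem stmt_16 :
    HasDerivWithinAt
      (fun d3 : ℝ =>
        1 - Real.exp ((Real.sqrt d3 - Real.sqrt (d3 - 2)) ^ 2 / 4) /
            (d3 - Real.sqrt (d3 * (d3 - 2))))
      (-(Real.sqrt (Real.exp 1)) / 8) (Set.Ici (2 : ℝ)) 2 := by
  change HasDerivWithinAt d1 _ _ _
  rw [hasDerivWithinAt_iff_tendsto_slope, Ici_sdiff_left]
  have hq : Tendsto (fun x => (√x - √(x - 2)) ^ 2) (𝓝[>] 2) (𝓝 2) := by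
    refine tendsto_nhdsWithin_of_tendsto_nhds ?_
    have h : Continuous fun x => (√x - √(x - 2)) ^ 2 := by fun_prop
    simpa using h.tendsto 2
  have hlim := (tendsto_reducedCurve_sub_div_sq.comp (tendsto_sub_sqrt_mul_nhdsNE two_pos)).mul hq
  rw [show -exp (1 / 2) / 16 * 2 = -√(exp 1) / 8 by rw [← exp_half]; ring] at hlim
  refine hlim.congr' ?_
  filter_upwards [self_mem_nhdsWithin] with x (hx : 2 < x)
  exact (slope_d1_two hx).symm
end
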